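/- Let D ⊆ E admit a d-flow and let e ∈ E with e ∈ A(D), i.e. the unique min-cost d-flow on D assigns flow 1 to e. Then A(D + e) = A(D); that is, the unique min-cost d-flow on D ∪ {e, rev e} coincides with that on D. -/

import Mathlib

open Finset

section Defs

variable {V : Type*}

/-- Reversal of a directed edge. -/
def drev (e : V × V) : V × V := (e.2, e.1)

/-- `K` is a subgraph of the (symmetric) edge set `E`: it contains either both or
neither of `e` and `drev e` for every `e ∈ E`. -/
def IsSubgraph [DecidableEq V] (E K : Finset (V × V)) : Prop :=
  K ⊆ E ∧ ∀ e ∈ E, (e ∈ K ↔ drev e ∈ K)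

/-- `L` is an orientation of the (symmetric) edge set `E`: it contains exactly one of
`e` and `drev e` for every `e ∈ E`. -/
def IsOrientation [DecidableEq V] (E L : Finset (V × V)) : Prop :=
  L ⊆ E ∧ ∀ e ∈ E, (e ∈ L ↔ drev e ∉ L)

variable [Fintype V] [DecidableEq V]

/-- `f` is a `d`-flow on the directed subgraph `D` of the graph with edge set `E`. -/
def IsFlow (E D : Finset (V × V)) (d : V → ℤ) (f : V × V → ℝ) : Prop :=
  (∀ e ∈ E, 0 ≤ f e ∧ f e ≤ 1) ∧
  (∀ e, e ∉ D → f e = 0) ∧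
  ∀ u : V,
    ((Finset.univ.filter (fun v : V => (u, v) ∈ E)).sum fun v => f (u, v)) -
      ((Finset.univ.filter (fun v : V => (v, u) ∈ E)).sum fun v => f (v, u)) = (d u : ℝ)

/-- A `d`-flow exists on `D`. -/
def AdmitsFlow (E D : Finset (V × V)) (d : V → ℤ) : Prop :=
  ∃ f : V × V → ℝ, IsFlow E D d f

/-- The `w`-cost of a flow `f`. -/
def flowCost (E : Finset (V × V)) (w : V × V → ℝ) (f : V × V → ℝ) : ℝ :=
  ∑ e ∈ E, w e * f e

/-- `f` is a min-cost `d`-flow on `D`. -/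
def IsMinCostFlow (E D : Finset (V × V)) (d : V → ℤ) (w : V × V → ℝ)
    (f : V × V → ℝ) : Prop :=
  IsFlow E D d f ∧ ∀ g : V × V → ℝ, IsFlow E D d g → flowCost E w f ≤ flowCost E w g

/-- The `{0,1}`-valued function determined by a set of edges. -/
def ind (S : Finset (V × V)) : V × V → ℝ := fun e => if e ∈ S then 1 else 0

/-- `A` assigns to every flow-admitting `D ⊆ E` the (edge set of the) unique,
`{0,1}`-valued min-cost `d`-flow on `D`. -/
def GoodA (E : Finset (V × V)) (d : V → ℤ) (w : V × V → ℝ)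
    (A : Finset (V × V) → Finset (V × V)) : Prop :=
  ∀ D : Finset (V × V), D ⊆ E → AdmitsFlow E D d →
    IsMinCostFlow E D d w (ind (A D)) ∧
    ∀ f : V × V → ℝ, IsMinCostFlow E D d w f → f = ind (A D)

/-- `A(D) = A(D')`: both `D` and `D'` admit a `d`-flow and their unique min-cost
`d`-flows coincide.  (If one of them admits no `d`-flow this is false.) -/
def AEq (E : Finset (V × V)) (d : V → ℤ) (A : Finset (V × V) → Finset (V × V))
    (D D' : Finset (V × V)) : Prop :=
  AdmitsFlow E D d ∧ AdmitsFlow E D' d ∧ A D = A D'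

/-- `D ⊕ e := (D ∪ {e}) \ {drev e}`. -/
def oplus (D : Finset (V × V)) (e : V × V) : Finset (V × V) := insert e D \ {drev e}

/-- `D + e := D ∪ {e, drev e}`. -/
def padd (D : Finset (V × V)) (e : V × V) : Finset (V × V) := D ∪ {e, drev e}

/-- `D − e := D \ {e, drev e}`. -/
def psub (D : Finset (V × V)) (e : V × V) : Finset (V × V) := D \ {e, drev e}

/-- The representative of `{e, drev e}` lying in the reference orientation `E'`. -/
def chi (E' : Finset (V × V)) (e : V × V) : V × V := if e ∈ E' then e else drev e

/-- The map `φ_e`. -/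
noncomputable def phiE (E : Finset (V × V)) (d : V → ℤ)
    (A : Finset (V × V) → Finset (V × V)) (E' : Finset (V × V))
    (e : V × V) (D : Finset (V × V)) : Finset (V × V) := by
  classical
  exact
    if ¬ AEq E d A D (oplus D e) then oplus D (drev e)
    else if ¬ AEq E d A D (oplus D (drev e)) then oplus D e
    else if e ∈ D then oplus D (chi E' e) else oplus D (drev (chi E' e))

/-- The map `ψ_e`. -/
noncomputable def psiE (E : Finset (V × V)) (d : V → ℤ)
    (A : Finset (V × V) → Finset (V × V)) (E' : Finset (V × V))
    (e : V × V) (D : Finset (V × V)) : Finset (V × V) := by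
  classical
  exact
    if ¬ AEq E d A D (padd D e) then psub D e
    else if ¬ AEq E d A D (psub D e) then padd D e
    else if chi E' e ∈ D then padd D e else psub D e

end Defs


/-!
Let `g = A(D)` and `f = A(D + e)`. If `f` used `drev e`, then `(f + g - 1_e - 1_{drev e}) / 2` would
be a flow on `D`, since the 2-cycle `{e, drev e}` has zero divergence, and its cost
`(c(f) + c(g) - w(e) - w(drev e)) / 2` would be below `c(g)`, because `c(f) ≤ c(g)`. So `f` avoids
`drev e`, hence is a flow on `D`, and being minimal on the larger set `D + e` it is the min-cost
flow on `D`.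
-/

section Flows

variable {V : Type*} {E D : Finset (V × V)} {d : V → ℤ} {w : V × V → ℝ} {f g : V × V → ℝ}
  {e : V × V}

@[simp]
theorem drev_drev (x : V × V) : drev (drev x) = x := rfl

theorem drev_eq_iff_eq_drev {x y : V × V} : drev x = y ↔ x = drev y := by
  constructor <;> rintro rfl <;> rfl

theorem flowCost_add : flowCost E w (f + g) = flowCost E w f + flowCost E w g := by
  simp only [flowCost, Pi.add_apply, mul_add, sum_add_distrib]

theorem flowCost_sub : flowCost E w (f - g) = flowCost E w f - flowCost E w g := by
  simp only [flowCost, Pi.sub_apply, mul_sub, sum_sub_distrib]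

theorem flowCost_smul (c : ℝ) : flowCost E w (c • f) = c * flowCost E w f := by
  simp only [flowCost, Pi.smul_apply, smul_eq_mul, mul_sum]
  exact sum_congr rfl fun _ _ => by ring

variable [DecidableEq V]

theorem ind_injective : Function.Injective (ind : Finset (V × V) → V × V → ℝ) := by
  intro S T h
  ext x
  have hx := congrFun h x
  simp only [ind] at hx
  split_ifs at hx <;> simp_all

theorem ind_nonneg (S : Finset (V × V)) (x : V × V) : 0 ≤ ind S x := by
  unfold ind
  split_ifs <;> norm_num

theorem flowCost_ind {S : Finset (V × V)} (hS : S ⊆ E) : flowCost E w (ind S) = ∑ x ∈ S, w x := by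
  simp only [flowCost, ind, mul_ite, mul_one, mul_zero, sum_ite_mem, inter_eq_right.2 hS]

theorem ind_pair_drev (x : V × V) : ind {e, drev e} (drev x) = ind {e, drev e} x := by
  simp only [ind, mem_insert, mem_singleton, drev_eq_iff_eq_drev, drev_drev, or_comm]

variable [Fintype V]

def divergence (E : Finset (V × V)) : (V × V → ℝ) →ₗ[ℝ] V → ℝ where
  toFun f u := (∑ v ∈ univ.filter (fun v => (u, v) ∈ E), f (u, v)) -
    ∑ v ∈ univ.filter (fun v => (v, u) ∈ E), f (v, u)
  map_add' f g := by
    ext u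
    simp only [Pi.add_apply, sum_add_distrib]
    ring
  map_smul' c f := by
    ext u
    simp only [Pi.smul_apply, smul_eq_mul, ← mul_sum, RingHom.id_apply]
    ring

theorem IsFlow.divergence_eq (hf : IsFlow E D d f) : divergence E f = fun u => (d u : ℝ) :=
  funext hf.2.2

theorem divergence_eq_zero_of_symm (hE : ∀ x ∉ E, f x = 0) (hf : ∀ x, f (drev x) = f x) :
    divergence E f = 0 := by
  have hsupp : ∀ x, f x ≠ 0 → x ∈ E := fun x hx => by_contra fun h => hx (hE x h)
  ext u
  change (∑ v ∈ univ.filter (fun v => (u, v) ∈ E), f (u, v)) -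
    ∑ v ∈ univ.filter (fun v => (v, u) ∈ E), f (v, u) = 0
  rw [sum_filter_of_ne fun v _ => hsupp _, sum_filter_of_ne fun v _ => hsupp _, sub_eq_zero]
  exact sum_congr rfl fun v _ => hf (v, u)

theorem IsFlow.mem_of_ne_zero (hf : IsFlow E D d f) {x : V × V} (hx : f x ≠ 0) : x ∈ D := by
  by_contra h
  exact hx (hf.2.1 x h)

theorem IsFlow.mono (hf : IsFlow E D d f) {D' : Finset (V × V)} (hD : D ⊆ D') :
    IsFlow E D' d f :=
  ⟨hf.1, fun x hx => hf.2.1 x fun h => hx (hD h), hf.2.2⟩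

theorem IsMinCostFlow.of_subset {D' : Finset (V × V)} (hf : IsMinCostFlow E D' d w f)
    (hD : D ⊆ D') (hfD : IsFlow E D d f) : IsMinCostFlow E D d w f :=
  ⟨hfD, fun g hg => hf.2 g (hg.mono hD)⟩

theorem IsFlow.of_padd (hf : IsFlow E (padd D e) d f) (he : e ∈ D)
    (hrev : drev e ∉ D → f (drev e) = 0) : IsFlow E D d f := by
  refine ⟨hf.1, fun x hx => ?_, hf.2.2⟩
  by_cases hxe : x = drev e
  · subst hxe
    exact hrev hx
  · refine hf.2.1 x ?_
    simp only [padd, mem_union, mem_insert, mem_singleton, not_or]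
    exact ⟨hx, fun h => hx (h ▸ he), hxe⟩

theorem IsFlow.half_smul_add_sub_ind_pair (hf : IsFlow E (padd D e) d f) (hg : IsFlow E D d g)
    (hf1 : f (drev e) = 1) (hg1 : g e = 1) (hrevD : drev e ∉ D) (hE : {e, drev e} ⊆ E) :
    IsFlow E D d ((1 / 2 : ℝ) • (f + g - ind {e, drev e})) := by
  have heD : e ∈ D := hg.mem_of_ne_zero (by simp [hg1])
  have hcycle_le : ∀ x ∈ E, ind {e, drev e} x ≤ f x + g x := fun x hx => by
    have hfx := (hf.1 x hx).1
    have hgx := (hg.1 x hx).1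
    rcases eq_or_ne x e with rfl | hxe
    · simp only [ind, mem_insert_self, if_true]
      linarith
    rcases eq_or_ne x (drev e) with rfl | hxr
    · simp only [ind, mem_insert, mem_singleton, or_true, if_true]
      linarith
    · simp only [ind, mem_insert, mem_singleton, hxe, hxr, or_self, if_false]
      linarith
  refine ⟨fun x hx => ?_, fun x hx => ?_, fun u => ?_⟩
  · have hfx := hf.1 x hx
    have hgx := hg.1 x hx
    have hcycle_x := hcycle_le x hx
    have hcycle_nonneg := ind_nonneg {e, drev e} x
    simp only [Pi.smul_apply, Pi.sub_apply, Pi.add_apply, smul_eq_mul]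
    constructor <;> linarith
  · have hgx := hg.2.1 x hx
    rcases eq_or_ne x (drev e) with rfl | hxr
    · simp [ind, hf1, hgx]
    · have hxe : x ≠ e := fun h => hx (h ▸ heD)
      have hfx : f x = 0 := hf.2.1 x (by simp [padd, hx, hxe, hxr])
      simp [ind, hfx, hgx, hxe, hxr]
  · have hcycle : divergence E (ind {e, drev e}) = 0 := by
      refine divergence_eq_zero_of_symm (fun x hx => ?_) fun x => ?_
      · simp only [ind, if_neg fun h => hx (hE h)]
      · exact ind_pair_drev x
    change divergence E _ u = _
    rw [map_smul, map_sub, map_add, hf.divergence_eq, hg.divergence_eq, hcycle]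
    simp only [Pi.smul_apply, Pi.sub_apply, Pi.add_apply, Pi.zero_apply, smul_eq_mul]
    ring

theorem IsMinCostFlow.apply_drev_ne_one (hf : IsMinCostFlow E (padd D e) d w f)
    (hg : IsMinCostFlow E D d w g) (hg1 : g e = 1) (hrevD : drev e ∉ D) (hE : {e, drev e} ⊆ E)
    (hw : ∀ x ∈ E, 0 < w x) : f (drev e) ≠ 1 := by
  intro hf1
  have hfg : flowCost E w f ≤ flowCost E w g := hf.2 g (hg.1.mono subset_union_left)
  have hcycle : 0 < flowCost E w (ind {e, drev e}) := by
    rw [flowCost_ind hE]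
    exact sum_pos (fun x hx => hw x (hE hx)) (insert_nonempty e {drev e})
  have hg_le := hg.2 _ (hf.1.half_smul_add_sub_ind_pair hg.1 hf1 hg1 hrevD hE)
  rw [flowCost_smul, flowCost_sub, flowCost_add] at hg_le
  linarith

end Flows

theorem minCostFlow_padd_of_mem_general
    {V : Type*} [Fintype V] [DecidableEq V]
    (E : Finset (V × V)) (hE_symm : ∀ e, e ∈ E ↔ drev e ∈ E)
    (d : V → ℤ)
    (w : V × V → ℝ) (hw : ∀ e ∈ E, 0 < w e)
    (A : Finset (V × V) → Finset (V × V)) (hA : GoodA E d w A)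
    (D : Finset (V × V)) (hD : D ⊆ E) (hDf : AdmitsFlow E D d)
    (e : V × V) (he : e ∈ E)
    (heA : e ∈ A D) :
    AEq E d A (padd D e) D := by
  obtain ⟨hg, hg_unique⟩ := hA D hD hDf
  have hge : ind (A D) e = 1 := if_pos heA
  have heD : e ∈ D := hg.1.mem_of_ne_zero (by simp [hge])
  have hpair : {e, drev e} ⊆ E := by simp [insert_subset_iff, he, (hE_symm e).1 he]
  have hDf' : AdmitsFlow E (padd D e) d := ⟨_, hg.1.mono subset_union_left⟩
  obtain ⟨hf, -⟩ := hA _ (union_subset hD hpair) hDf'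
  have hfD : IsFlow E D d (ind (A (padd D e))) := hf.1.of_padd heD fun hrevD => by
    simpa [ind] using hf.apply_drev_ne_one hg hge hrevD hpair hw
  exact ⟨hDf', hDf, ind_injective (hg_unique _ (hf.of_subset subset_union_left hfD))⟩

theorem minCostFlow_padd_of_mem
    {V : Type*} [Fintype V] [DecidableEq V]
    (E : Finset (V × V)) (hE_symm : ∀ e, e ∈ E ↔ drev e ∈ E)
    (hE_ne : ∀ e ∈ E, e.1 ≠ e.2)
    (d : V → ℤ) (hd : ∑ u : V, d u = 0)
    (w : V × V → ℝ) (hw : ∀ e ∈ E, 0 < w e)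
    (A : Finset (V × V) → Finset (V × V)) (hA : GoodA E d w A)
    (D : Finset (V × V)) (hD : D ⊆ E) (hDf : AdmitsFlow E D d)
    (e : V × V) (he : e ∈ E)
    (heA : e ∈ A D) :
    AEq E d A (padd D e) D :=
  minCostFlow_padd_of_mem_general E hE_symm d w hw A hA D hD hDf e he heA
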